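/- Let P be any distribution over the Euclidean unit ball B₂^d(1) with mean μ_P, and let Z ~ N(μ_Z, σ_Z² I_d) with σ_Z ∈ (0,1] and ‖μ_Z‖₂ ≤ 2. Then with probability at least 1 − 2exp(−0.1/σ_Z²) over Z, we have |⟨Z, E_{U∼P}[clip_{Z,3}(U)] − μ_P⟩| ≤ 2exp(−0.1/σ_Z²). -/

import Mathlib

open MeasureTheory Real RealInnerProductSpace

noncomputable def gaussianPi {d : ℕ} (μZ : EuclideanSpace ℝ (Fin d)) (σ : ℝ) :
    Measure (EuclideanSpace ℝ (Fin d)) :=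
  volume.withDensity (fun x =>
    ENNReal.ofReal ((2 * π * σ ^ 2) ^ (-(d : ℝ) / 2) * Real.exp (-‖x - μZ‖ ^ 2 / (2 * σ ^ 2))))

noncomputable def clip {d : ℕ} (φ : EuclideanSpace ℝ (Fin d)) (c : ℝ)
    (u : EuclideanSpace ℝ (Fin d)) : EuclideanSpace ℝ (Fin d) :=
  if ⟪φ, u⟫ ≠ 0 then (min 1 (c / |⟪φ, u⟫|)) • u else u

/-!
Clipping changes `⟪z, u⟫` by exactly `max (|⟪z, u⟫| - 3) 0`, so the quantity to control is at
most `H z = E_U (|⟪z, U⟫| - 3)₊`. Since `Z = μ_Z + σ_Z G` with `G` standard Gaussian, for a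
fixed `u` in the unit ball `⟪Z, u⟫` is Gaussian with mean `⟪μ_Z, u⟫ ∈ [-2, 2]` and variance at
most `σ_Z²`. A Chernoff bound with parameter `σ_Z⁻²` (via `y₊ ≤ exp (y - 1)` and the Gaussian
moment generating function) gives `E_Z (|⟪Z, u⟫| - 3)₊ ≤ 4 exp (-0.2 / σ_Z²)`. By Tonelli the
same bound holds for `E_Z H(Z)`, and Markov's inequality at level `2 exp (-0.1 / σ_Z²)`, whose
square is that bound, concludes.
-/

open ProbabilityTheory
open scoped NNReal ENNReal

theorem MeasureTheory.MeasurePreserving.map_withDensity {α β : Type*} [MeasurableSpace α]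
    [MeasurableSpace β] {μ : Measure α} {ν : Measure β} {e : α ≃ᵐ β}
    (he : MeasurePreserving e μ ν) (g : α → ℝ≥0∞) :
    (μ.withDensity g).map e = ν.withDensity (g ∘ e.symm) := by
  ext s hs
  rw [Measure.map_apply e.measurable hs, withDensity_apply _ (e.measurable hs),
    withDensity_apply _ hs, ← he.symm.setLIntegral_comp_preimage_emb e.symm.measurableEmbedding]
  simp

theorem MeasureTheory.Measure.pi_withDensity_ofReal {ι : Type*} [Fintype ι] {α : ι → Type*}
    [∀ i, MeasurableSpace (α i)] {μ : ∀ i, Measure (α i)} [∀ i, SigmaFinite (μ i)]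
    {f : ∀ i, α i → ℝ} (hf : ∀ i, Integrable (f i) (μ i)) (hf0 : ∀ i x, 0 ≤ f i x) :
    Measure.pi (fun i => (μ i).withDensity (fun x => ENNReal.ofReal (f i x))) =
      (Measure.pi μ).withDensity (fun x => ENNReal.ofReal (∏ i, f i (x i))) := by
  have := fun i => isFiniteMeasure_withDensity_ofReal (hf i).2
  refine Measure.pi_eq fun s hs => ?_
  have hfs : ∀ i, Integrable (f i) ((μ i).restrict (s i)) := fun i => (hf i).restrict
  rw [withDensity_apply _ (MeasurableSet.univ_pi hs), Measure.restrict_pi_pi,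
    ← ofReal_integral_eq_lintegral_ofReal (Integrable.fintype_prod_dep hfs)
      (.of_forall fun x => Finset.prod_nonneg fun i _ => hf0 i (x i)),
    integral_fintype_prod_eq_prod, ENNReal.ofReal_prod_of_nonneg
      fun i _ => integral_nonneg (hf0 i)]
  refine Finset.prod_congr rfl fun i _ => ?_
  rw [withDensity_apply _ (hs i), ofReal_integral_eq_lintegral_ofReal (hfs i) (.of_forall (hf0 i))]

theorem gaussianReal_map_const_add_mul (μ m σ : ℝ) (v : ℝ≥0) :
    (gaussianReal μ v).map (fun t => m + σ * t) =
      gaussianReal (m + σ * μ) ((σ ^ 2).toNNReal * v) := by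
  have : (fun t => m + σ * t) = (m + ·) ∘ (σ * ·) := rfl
  rw [this, ← Measure.map_map (by fun_prop) (by fun_prop), gaussianReal_map_const_mul,
    gaussianReal_map_const_add, add_comm]
  congr 2
  ext
  simp [sq_nonneg]

theorem stdGaussian_map_innerSL {E : Type*} [NormedAddCommGroup E] [InnerProductSpace ℝ E]
    [FiniteDimensional ℝ E] [MeasurableSpace E] [BorelSpace E] (u : E) :
    (stdGaussian E).map (innerSL ℝ u) = gaussianReal 0 (‖u‖ ^ 2).toNNReal := by
  rw [IsGaussian.map_eq_gaussianReal, integral_strongDual_stdGaussian, variance_dual_stdGaussian,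
    innerSL_apply_norm]

theorem prod_gaussianPDFReal {ι : Type*} [Fintype ι] (μ x : EuclideanSpace ℝ ι) (v : ℝ≥0) :
    ∏ i, gaussianPDFReal (μ i) v (x i) =
      (2 * π * v) ^ (-(Fintype.card ι : ℝ) / 2) * exp (-‖x - μ‖ ^ 2 / (2 * v)) := by
  simp only [gaussianPDFReal, Finset.prod_mul_distrib, Finset.prod_const, ← Real.exp_sum,
    Finset.card_univ, EuclideanSpace.norm_sq_eq, ← Finset.sum_div, ← Finset.sum_neg_distrib]
  congr 1
  · rw [Real.sqrt_eq_rpow, ← Real.rpow_neg (by positivity), ← Real.rpow_natCast,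
      ← Real.rpow_mul (by positivity)]
    ring_nf
  · simp [Real.norm_eq_abs, sq_abs]

theorem gaussianPi_eq_map_stdGaussian {d : ℕ} (μ : EuclideanSpace ℝ (Fin d)) {σ : ℝ}
    (hσ : σ ≠ 0) :
    gaussianPi μ σ = (stdGaussian (EuclideanSpace ℝ (Fin d))).map (fun x => μ + σ • x) := by
  have hv : (σ ^ 2).toNNReal ≠ 0 := by simpa [sq_pos_iff] using hσ
  have hcoord : (fun x => μ + σ • x) ∘ WithLp.toLp 2 =
      WithLp.toLp 2 ∘ (fun x i => μ i + σ * x i) := by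
    ext x i
    simp
  have he : MeasurePreserving (MeasurableEquiv.toLp 2 (Fin d → ℝ)) :=
    (EuclideanSpace.volume_preserving_symm_measurableEquiv_toLp (Fin d)).symm
  rw [← map_pi_eq_stdGaussian, Measure.map_map (by fun_prop) (by fun_prop), hcoord,
    ← Measure.map_map (by fun_prop) (by fun_prop),
    Measure.pi_map_pi (f := fun i t => μ i + σ * t) (fun _ => by fun_prop)]
  simp_rw [gaussianReal_map_const_add_mul, mul_zero, add_zero, mul_one,
    gaussianReal_of_var_ne_zero _ hv, gaussianPDF_def]
  rw [Measure.pi_withDensity_ofReal (fun _ => integrable_gaussianPDFReal _ _)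
    (fun _ => gaussianPDFReal_nonneg _ _), ← volume_pi, ← MeasurableEquiv.coe_toLp,
    he.map_withDensity]
  simp [gaussianPi, prod_gaussianPDFReal, Function.comp_def, sq_nonneg]

theorem gaussianPi_map_inner {d : ℕ} (μ u : EuclideanSpace ℝ (Fin d)) {σ : ℝ} (hσ : σ ≠ 0) :
    (gaussianPi μ σ).map (fun z => ⟪z, u⟫) = gaussianReal ⟪μ, u⟫ (σ ^ 2 * ‖u‖ ^ 2).toNNReal := by
  have hcomp : (fun z => ⟪z, u⟫) ∘ (fun x => μ + σ • x) =
      (fun t => ⟪μ, u⟫ + σ * t) ∘ innerSL ℝ u := by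
    ext x
    simp only [Function.comp_apply, innerSL_apply_apply, inner_add_right, real_inner_smul_right,
      real_inner_comm u]
  rw [gaussianPi_eq_map_stdGaussian μ hσ, Measure.map_map (by fun_prop) (by fun_prop), hcomp,
    ← Measure.map_map (by fun_prop) (by fun_prop), stdGaussian_map_innerSL,
    gaussianReal_map_const_add_mul, mul_zero, add_zero, Real.toNNReal_mul (sq_nonneg σ)]

theorem max_abs_sub_le_exp {x a l : ℝ} (hl : 0 < l) :
    max (|x| - a) 0 ≤ l⁻¹ * exp (-(l * a) - 1) * (exp (l * x) + exp (-l * x)) := by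
  have hexp : exp (l * |x|) ≤ exp (l * x) + exp (-l * x) := by
    rcases abs_choice x with h | h <;> rw [h]
    · exact le_add_of_nonneg_right (exp_pos _).le
    · rw [mul_neg, ← neg_mul]
      exact le_add_of_nonneg_left (exp_pos _).le
  calc max (|x| - a) 0 = l⁻¹ * max (l * |x| - l * a) 0 := by
        rw [mul_max_of_nonneg _ _ (inv_nonneg.2 hl.le), mul_zero]
        field_simp
    _ ≤ l⁻¹ * exp (l * |x| - l * a - 1) := by
        gcongr
        exact max_le (by linarith [add_one_le_exp (l * |x| - l * a - 1)]) (exp_pos _).le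
    _ = l⁻¹ * exp (-(l * a) - 1) * exp (l * |x|) := by
        rw [mul_assoc, ← exp_add]
        ring_nf
    _ ≤ _ := by gcongr

theorem lintegral_max_abs_sub_gaussianReal_le (m a : ℝ) (v : ℝ≥0) {l : ℝ} (hl : 0 < l) :
    ∫⁻ x, ENNReal.ofReal (max (|x| - a) 0) ∂gaussianReal m v ≤
      ENNReal.ofReal (l⁻¹ * exp (-(l * a) - 1) *
        (exp (m * l + v * l ^ 2 / 2) + exp (-(m * l) + v * l ^ 2 / 2))) := by
  have hmgf (t : ℝ) : ∫ x, exp (t * x) ∂gaussianReal m v = exp (m * t + v * t ^ 2 / 2) :=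
    congrFun mgf_fun_id_gaussianReal t
  have hint : Integrable (fun x => l⁻¹ * exp (-(l * a) - 1) * (exp (l * x) + exp (-l * x)))
      (gaussianReal m v) :=
    ((integrable_exp_mul_gaussianReal l).add (integrable_exp_mul_gaussianReal (-l))).const_mul _
  calc ∫⁻ x, ENNReal.ofReal (max (|x| - a) 0) ∂gaussianReal m v
      ≤ ∫⁻ x, ENNReal.ofReal (l⁻¹ * exp (-(l * a) - 1) * (exp (l * x) + exp (-l * x)))
          ∂gaussianReal m v :=
        lintegral_mono fun x => ENNReal.ofReal_le_ofReal (max_abs_sub_le_exp hl)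
    _ = _ := by
        rw [← ofReal_integral_eq_lintegral_ofReal hint (.of_forall fun x => by positivity),
          integral_const_mul, integral_add (integrable_exp_mul_gaussianReal l)
            (integrable_exp_mul_gaussianReal (-l)), hmgf, hmgf, mul_neg, neg_sq]

theorem lintegral_max_abs_inner_sub_gaussianPi_le {d : ℕ} {μ u : EuclideanSpace ℝ (Fin d)}
    {σ : ℝ} (hσ0 : 0 < σ) (hσ1 : σ ≤ 1) (hμ : ‖μ‖ ≤ 2) (hu : ‖u‖ ≤ 1) :
    ∫⁻ z, ENNReal.ofReal (max (|⟪z, u⟫| - 3) 0) ∂gaussianPi μ σ ≤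
      ENNReal.ofReal (4 * exp (-0.2 / σ ^ 2)) := by
  set l := (σ ^ 2)⁻¹ with hl
  have hl0 : 0 < l := by positivity
  have hlσ : σ ^ 2 * l = 1 := mul_inv_cancel₀ (by positivity)
  have hm : |⟪μ, u⟫| ≤ 2 := (abs_real_inner_le_norm μ u).trans (by nlinarith [norm_nonneg u])
  have hv : ((σ ^ 2 * ‖u‖ ^ 2).toNNReal : ℝ) ≤ σ ^ 2 := by
    rw [Real.coe_toNNReal _ (by positivity)]
    nlinarith [norm_nonneg u, sq_nonneg σ]
  have hexponent : |⟪μ, u⟫| * l + (σ ^ 2 * ‖u‖ ^ 2).toNNReal * l ^ 2 / 2 ≤ 5 / 2 * l := by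
    nlinarith
  rw [← lintegral_map (f := fun t => ENNReal.ofReal (max (|t| - 3) 0)) (by fun_prop)
    (by fun_prop), gaussianPi_map_inner μ u hσ0.ne']
  refine (lintegral_max_abs_sub_gaussianReal_le _ 3 _ hl0).trans (ENNReal.ofReal_le_ofReal ?_)
  calc l⁻¹ * exp (-(l * 3) - 1) * (exp (⟪μ, u⟫ * l + (σ ^ 2 * ‖u‖ ^ 2).toNNReal * l ^ 2 / 2) +
        exp (-(⟪μ, u⟫ * l) + (σ ^ 2 * ‖u‖ ^ 2).toNNReal * l ^ 2 / 2))
      ≤ l⁻¹ * exp (-(l * 3) - 1) * (exp (5 / 2 * l) + exp (5 / 2 * l)) := by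
        gcongr
        · nlinarith [le_abs_self ⟪μ, u⟫]
        · nlinarith [neg_abs_le ⟪μ, u⟫]
    _ = 2 * σ ^ 2 * exp (-(l / 2) - 1) := by
        rw [hl, inv_inv, show -((σ ^ 2)⁻¹ / 2) - 1 = -((σ ^ 2)⁻¹ * 3) - 1 + 5 / 2 * (σ ^ 2)⁻¹ by
          ring, exp_add]
        ring
    _ ≤ 4 * exp (-0.2 / σ ^ 2) := by
        rw [show -0.2 / σ ^ 2 = -0.2 * l by rw [hl, div_eq_mul_inv]]
        gcongr
        · nlinarith
        · linarith

theorem lintegral_lintegral_max_abs_inner_sub_le {d : ℕ} {P : Measure (EuclideanSpace ℝ (Fin d))}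
    [IsProbabilityMeasure P] (hP : ∀ᵐ u ∂P, ‖u‖ ≤ 1) {μ : EuclideanSpace ℝ (Fin d)} {σ : ℝ}
    (hσ0 : 0 < σ) (hσ1 : σ ≤ 1) (hμ : ‖μ‖ ≤ 2) :
    ∫⁻ z, ∫⁻ u, ENNReal.ofReal (max (|⟪z, u⟫| - 3) 0) ∂P ∂gaussianPi μ σ ≤
      ENNReal.ofReal (4 * exp (-0.2 / σ ^ 2)) := by
  have : SFinite (gaussianPi μ σ) := by unfold gaussianPi; infer_instance
  rw [lintegral_lintegral_swap (by fun_prop)]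
  calc ∫⁻ u, ∫⁻ z, ENNReal.ofReal (max (|⟪z, u⟫| - 3) 0) ∂gaussianPi μ σ ∂P
      ≤ ∫⁻ _, ENNReal.ofReal (4 * exp (-0.2 / σ ^ 2)) ∂P :=
        lintegral_mono_ae (hP.mono fun u hu =>
          lintegral_max_abs_inner_sub_gaussianPi_le hσ0 hσ1 hμ hu)
    _ = ENNReal.ofReal (4 * exp (-0.2 / σ ^ 2)) := by simp

theorem abs_inner_clip_sub_inner {d : ℕ} (φ u : EuclideanSpace ℝ (Fin d)) {c : ℝ} (hc : 0 ≤ c) :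
    |⟪φ, clip φ c u⟫ - ⟪φ, u⟫| = max (|⟪φ, u⟫| - c) 0 := by
  unfold clip
  split_ifs with h
  · have ht : 0 < |⟪φ, u⟫| := abs_pos.2 h
    rw [real_inner_smul_right]
    rcases le_total |⟪φ, u⟫| c with hle | hle
    · rw [min_eq_left ((one_le_div ht).2 hle), one_mul, sub_self, abs_zero,
        max_eq_right (by linarith)]
    · rw [min_eq_right ((div_le_one ht).2 hle), max_eq_left (by linarith), ← sub_one_mul,
        abs_mul, abs_of_nonpos (by linarith [(div_le_one ht).2 hle])]
      field_simp
      ring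
  · simp [not_not.1 h, hc]

theorem norm_clip_le {d : ℕ} (φ u : EuclideanSpace ℝ (Fin d)) {c : ℝ} (hc : 0 ≤ c) :
    ‖clip φ c u‖ ≤ ‖u‖ := by
  unfold clip
  split_ifs
  · rw [norm_smul]
    refine mul_le_of_le_one_left (norm_nonneg u) ?_
    rw [Real.norm_of_nonneg (by positivity)]
    exact min_le_left _ _
  · exact le_rfl

theorem measurable_clip {d : ℕ} (φ : EuclideanSpace ℝ (Fin d)) (c : ℝ) :
    Measurable (clip φ c) := by
  unfold clip
  refine Measurable.ite ?_ (by fun_prop) measurable_id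
  exact (measurableSet_singleton 0).compl.preimage (by fun_prop)

theorem abs_inner_integral_clip_sub_integral_le {d : ℕ} {P : Measure (EuclideanSpace ℝ (Fin d))}
    (hP : Integrable (fun u => u) P) (φ : EuclideanSpace ℝ (Fin d)) {c : ℝ} (hc : 0 ≤ c) :
    ENNReal.ofReal |⟪φ, (∫ u, clip φ c u ∂P) - ∫ u, u ∂P⟫| ≤
      ∫⁻ u, ENNReal.ofReal (max (|⟪φ, u⟫| - c) 0) ∂P := by
  have hclip : Integrable (clip φ c) P :=
    hP.norm.mono' (measurable_clip φ c).aestronglyMeasurable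
      (.of_forall fun u => norm_clip_le φ u hc)
  rw [inner_sub_right, ← integral_inner hclip, ← integral_inner hP,
    ← integral_sub (hclip.const_inner φ) (hP.const_inner φ), ← Real.enorm_eq_ofReal_abs]
  refine (enorm_integral_le_lintegral_enorm _).trans_eq (lintegral_congr fun u => ?_)
  rw [Real.enorm_eq_ofReal_abs, abs_inner_clip_sub_inner φ u hc]

theorem measure_le_of_lintegral_le_sq {α : Type*} [MeasurableSpace α] {μ : Measure α}
    {f : α → ℝ≥0∞} (hf : AEMeasurable f μ) {t : ℝ} (ht : 0 < t)
    (h : ∫⁻ x, f x ∂μ ≤ ENNReal.ofReal (t ^ 2)) :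
    μ {x | ENNReal.ofReal t ≤ f x} ≤ ENNReal.ofReal t := by
  refine (meas_ge_le_lintegral_div hf (ENNReal.ofReal_pos.2 ht).ne' ENNReal.ofReal_ne_top).trans
    (ENNReal.div_le_of_le_mul ?_)
  rwa [← ENNReal.ofReal_mul ht.le, ← sq]

theorem clip_concentration {d : ℕ} (P : Measure (EuclideanSpace ℝ (Fin d)))
    [IsProbabilityMeasure P] (hP : ∀ᵐ u ∂P, ‖u‖ ≤ 1)
    (μZ : EuclideanSpace ℝ (Fin d)) (σZ : ℝ)
    (hσ0 : 0 < σZ) (hσ1 : σZ ≤ 1) (hμ : ‖μZ‖ ≤ 2) :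
    gaussianPi μZ σZ
        {z | 2 * Real.exp (-0.1 / σZ ^ 2) <
          |⟪z, (∫ u, clip z 3 u ∂P) - ∫ u, u ∂P⟫|} ≤
      ENNReal.ofReal (2 * Real.exp (-0.1 / σZ ^ 2)) := by
  have hint : Integrable (fun u => u) P :=
    (integrable_const (1 : ℝ)).mono' aestronglyMeasurable_id (by simpa using hP)
  have hsq : 4 * exp (-0.2 / σZ ^ 2) = (2 * exp (-0.1 / σZ ^ 2)) ^ 2 := by
    rw [mul_pow, sq (exp _), ← exp_add]
    ring_nf
  calc gaussianPi μZ σZ {z | 2 * exp (-0.1 / σZ ^ 2) < |⟪z, (∫ u, clip z 3 u ∂P) - ∫ u, u ∂P⟫|}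
      ≤ gaussianPi μZ σZ {z | ENNReal.ofReal (2 * exp (-0.1 / σZ ^ 2)) ≤
          ∫⁻ u, ENNReal.ofReal (max (|⟪z, u⟫| - 3) 0) ∂P} :=
        measure_mono fun z hz => (ENNReal.ofReal_le_ofReal hz.le).trans
          (abs_inner_integral_clip_sub_integral_le hint z (by norm_num))
    _ ≤ ENNReal.ofReal (2 * exp (-0.1 / σZ ^ 2)) :=
        measure_le_of_lintegral_le_sq (by fun_prop) (by positivity)
          (hsq ▸ lintegral_lintegral_max_abs_inner_sub_le hP hσ0 hσ1 hμ)
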